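/- arXiv:1703.01511 — 3 statements merged into one kernel-verified Lean document; each statement's English description precedes it below -/
import Mathlib

section
/- Let d ≥ 2 and suppose 𝒞 ∈ 𝕏_d is a convex domain such that 𝒞 ∩ (e₁ + span_ℂ{e₂,…,e_d}) = ∅ and the slice 𝒞 ∩ span_ℂ{e₁,e₂}, regarded as a convex domain in ℂ² via the identification (z₁,z₂) ↦ z₁e₁ + z₂e₂, belongs to 𝕂₂. Then there exists a complex affine automorphism A of ℂ^d such that A restricts to the identity on span_ℂ{e₁,e₂} and A(𝒞) ∈ 𝕂_d. -/
open Set Metric Filter Asymptotics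

noncomputable section

abbrev Eucl (d : ℕ) : Type := EuclideanSpace ℂ (Fin d)

/-- The `i`-th standard basis vector of `ℂ^d`. -/
def stdB (d : ℕ) (i : Fin d) : Eucl d := EuclideanSpace.single i 1

/-- `ρ : U → ℝ` is a local `C^k` defining function for `Ω` on the open set `U`. -/
def IsLocalDefining (d k : ℕ) (Ω U : Set (Eucl d)) (ρ : Eucl d → ℝ) : Prop :=
  IsOpen U ∧ ContDiffOn ℝ k ρ U ∧
  Ω ∩ U = {x | x ∈ U ∧ ρ x < 0} ∧
  ∀ ξ ∈ U, ρ ξ = 0 → fderiv ℝ ρ ξ ≠ 0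

/-- `Ω` has `C^k` boundary. -/
def HasCkBoundary (d k : ℕ) (Ω : Set (Eucl d)) : Prop :=
  ∀ ξ₀ ∈ frontier Ω, ∃ (U : Set (Eucl d)) (ρ : Eucl d → ℝ),
    ξ₀ ∈ U ∧ IsLocalDefining d k Ω U ρ

/-- `Ω` has `C^{2,α}` boundary: local `C²` defining functions with `α`-Hölder second derivative. -/
def HasC2HolderBoundary (d : ℕ) (α : ℝ) (Ω : Set (Eucl d)) : Prop :=
  ∀ ξ₀ ∈ frontier Ω, ∃ (U : Set (Eucl d)) (ρ : Eucl d → ℝ),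
    ξ₀ ∈ U ∧ IsLocalDefining d 2 Ω U ρ ∧
    ∃ C : NNReal, HolderOnWith C α.toNNReal (iteratedFDeriv ℝ 2 ρ) U

/-- `Ω` (with `C²` boundary) is strongly pseudoconvex. -/
def StronglyPseudoconvex (d : ℕ) (Ω : Set (Eucl d)) : Prop :=
  HasCkBoundary d 2 Ω ∧
  ∀ ξ ∈ frontier Ω, ∃ (U : Set (Eucl d)) (ρ : Eucl d → ℝ),
    ξ ∈ U ∧ IsLocalDefining d 2 Ω U ρ ∧
    ∀ v : Eucl d, v ≠ 0 → fderiv ℝ ρ ξ v = 0 → fderiv ℝ ρ ξ (Complex.I • v) = 0 →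
      0 < iteratedFDeriv ℝ 2 ρ ξ ![v, v] +
          iteratedFDeriv ℝ 2 ρ ξ ![Complex.I • v, Complex.I • v]

/-- A domain: nonempty connected open set. -/
def IsDomain' (d : ℕ) (Ω : Set (Eucl d)) : Prop := IsOpen Ω ∧ IsConnected Ω

/-- A convex domain: nonempty open convex set. -/
def IsConvexDomain (d : ℕ) (Ω : Set (Eucl d)) : Prop :=
  Ω.Nonempty ∧ IsOpen Ω ∧ Convex ℝ Ω

/-- Two sets are biholomorphic. -/
def Biholomorphic (d : ℕ) (Ω₁ Ω₂ : Set (Eucl d)) : Prop :=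
  ∃ f g : Eucl d → Eucl d,
    DifferentiableOn ℂ f Ω₁ ∧ DifferentiableOn ℂ g Ω₂ ∧
    MapsTo f Ω₁ Ω₂ ∧ MapsTo g Ω₂ Ω₁ ∧
    (∀ x ∈ Ω₁, g (f x) = x) ∧ (∀ y ∈ Ω₂, f (g y) = y)

/-- `δ_Ω(z)`: distance to the boundary. -/
def bddDist (d : ℕ) (Ω : Set (Eucl d)) (z : Eucl d) : ℝ := infDist z (frontier Ω)

/-- `δ_Ω(z; v)`: distance to the boundary in the complex direction `v`. -/
def bddDistDir (d : ℕ) (Ω : Set (Eucl d)) (z v : Eucl d) : ℝ :=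
  infDist z (frontier Ω ∩ {w | ∃ ζ : ℂ, w = z + ζ • v})

/-- The squeezing function. -/
def squeezingFun (d : ℕ) (Ω : Set (Eucl d)) (p : Eucl d) : ℝ :=
  sSup {r : ℝ | 0 < r ∧ ∃ f : Eucl d → Eucl d,
    InjOn f Ω ∧ DifferentiableOn ℂ f Ω ∧ f p = 0 ∧
    f '' Ω ⊆ ball (0 : Eucl d) 1 ∧ ball (0 : Eucl d) r ⊆ f '' Ω}

/-- Membership in `𝕏_d`: convex domains containing no complex affine line. -/
def InXd (d : ℕ) (Ω : Set (Eucl d)) : Prop :=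
  IsConvexDomain d Ω ∧ ¬ ∃ (z v : Eucl d), v ≠ 0 ∧ ∀ ζ : ℂ, z + ζ • v ∈ Ω

/-- Convergence in the local Hausdorff topology. -/
def LocHausTendsto (d : ℕ) (C : ℕ → Set (Eucl d)) (D : Set (Eucl d)) : Prop :=
  ∃ R₀ : ℝ, 0 < R₀ ∧ ∀ R : ℝ, R₀ ≤ R →
    Tendsto (fun n => hausdorffDist (closure (C n) ∩ closedBall (0 : Eucl d) R)
      (closure D ∩ closedBall (0 : Eucl d) R)) atTop (nhds 0)

/-- An intrinsic function on `𝕏_{d,0}`. -/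
def IntrinsicFun (d : ℕ) (f : Set (Eucl d) → Eucl d → ℝ) : Prop :=
  ∀ C₁ C₂ : Set (Eucl d), ∀ x₁ x₂ : Eucl d,
    InXd d C₁ → InXd d C₂ → x₁ ∈ C₁ → x₂ ∈ C₂ →
    (∃ φ ψ : Eucl d → Eucl d,
      DifferentiableOn ℂ φ C₁ ∧ DifferentiableOn ℂ ψ C₂ ∧
      MapsTo φ C₁ C₂ ∧ MapsTo ψ C₂ C₁ ∧
      (∀ x ∈ C₁, ψ (φ x) = x) ∧ (∀ y ∈ C₂, φ (ψ y) = y) ∧ φ x₁ = x₂) →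
    f C₁ x₁ = f C₂ x₂

/-- Continuity of a function on `𝕏_{d,0}` with respect to the local Hausdorff topology. -/
def IntrinsicContinuousFun (d : ℕ) (f : Set (Eucl d) → Eucl d → ℝ) : Prop :=
  ∀ (C : ℕ → Set (Eucl d)) (x : ℕ → Eucl d) (D : Set (Eucl d)) (y : Eucl d),
    (∀ n, InXd d (C n)) → (∀ n, x n ∈ C n) → InXd d D → y ∈ D →
    LocHausTendsto d C D → Tendsto x atTop (nhds y) →
    Tendsto (fun n => f (C n) (x n)) atTop (nhds (f D y))

/-- Upper semicontinuity of a function on `𝕏_{d,0}`. -/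
def IntrinsicUSCFun (d : ℕ) (f : Set (Eucl d) → Eucl d → ℝ) : Prop :=
  ∀ (C : ℕ → Set (Eucl d)) (x : ℕ → Eucl d) (D : Set (Eucl d)) (y : Eucl d),
    (∀ n, InXd d (C n)) → (∀ n, x n ∈ C n) → InXd d D → y ∈ D →
    LocHausTendsto d C D → Tendsto x atTop (nhds y) →
    Filter.limsup (fun n => f (C n) (x n)) atTop ≤ f D y

/-- Membership in `𝕂_d`. -/
def InKd (d : ℕ) (Ω : Set (Eucl d)) : Prop :=
  InXd d Ω ∧ ∀ i : Fin d,
    {w : Eucl d | ∃ ζ : ℂ, ‖ζ‖ < 1 ∧ w = ζ • stdB d i} ⊆ Ω ∧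
    Ω ∩ {x : Eucl d | ∃ y ∈ Submodule.span ℂ (stdB d '' {j : Fin d | i < j}),
      x = stdB d i + y} = ∅

/-- `D ∈ BlowUp(C)`. -/
def InBlowUp (d : ℕ) (C D : Set (Eucl d)) : Prop :=
  InXd d D ∧
  ∃ (x : ℕ → Eucl d) (xlim : Eucl d) (A : ℕ → (Eucl d ≃ᵃ[ℂ] Eucl d)),
    (∀ n, x n ∈ C) ∧
    (∀ K : Set (Eucl d), K ⊆ C → IsCompact K → ∀ᶠ n in atTop, x n ∉ K) ∧
    xlim ∈ D ∧
    LocHausTendsto d (fun n => (A n) '' C) D ∧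
    Tendsto (fun n => A n (x n)) atTop (nhds xlim)

/-- The unit disc in `ℂ`. -/
def unitDisc : Set ℂ := ball (0 : ℂ) 1

/-- The Poincaré distance on the unit disc. -/
def poincareDist (a b : ℂ) : ℝ :=
  (1 / 2) * Real.log ((1 + ‖(a - b) / (1 - (starRingEnd ℂ) b * a)‖) /
    (1 - ‖(a - b) / (1 - (starRingEnd ℂ) b * a)‖))

/-- The Kobayashi pseudodistance of `Ω`, defined via chains of holomorphic discs. -/
def kobayashiDist {F : Type*} [NormedAddCommGroup F] [NormedSpace ℂ F]
    (Ω : Set F) (x y : F) : ℝ :=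
  sInf {r : ℝ | ∃ (m : ℕ) (a b : Fin (m + 1) → ℂ) (f : Fin (m + 1) → ℂ → F),
    (∀ i, a i ∈ unitDisc) ∧ (∀ i, b i ∈ unitDisc) ∧
    (∀ i, DifferentiableOn ℂ (f i) unitDisc) ∧
    (∀ i, MapsTo (f i) unitDisc Ω) ∧
    f 0 (a 0) = x ∧
    (∀ i : Fin m, f i.castSucc (b i.castSucc) = f i.succ (a i.succ)) ∧
    f (Fin.last m) (b (Fin.last m)) = y ∧
    r = ∑ i, poincareDist (a i) (b i)}

/-- A geodesic ray `γ : [0,∞) → Ω` for the Kobayashi distance. -/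
def IsGeodesicRay {F : Type*} [NormedAddCommGroup F] [NormedSpace ℂ F]
    (Ω : Set F) (γ : ℝ → F) : Prop :=
  (∀ t : ℝ, 0 ≤ t → γ t ∈ Ω) ∧
  ∀ s t : ℝ, 0 ≤ s → 0 ≤ t → kobayashiDist Ω (γ s) (γ t) = |s - t|

/-- A complex geodesic `φ : 𝔻 → Ω`. -/
def IsComplexGeodesic {F : Type*} [NormedAddCommGroup F] [NormedSpace ℂ F]
    (Ω : Set F) (φ : ℂ → F) : Prop :=
  DifferentiableOn ℂ φ unitDisc ∧ MapsTo φ unitDisc Ω ∧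
  ∀ z ∈ unitDisc, ∀ w ∈ unitDisc, kobayashiDist Ω (φ z) (φ w) = poincareDist z w

/-- The upper half-plane in `ℂ`. -/
def upperHalf : Set ℂ := {z : ℂ | 0 < z.im}

/-- `u` is the inward-pointing unit normal vector of `∂Ω` at `ξ`. -/
def IsInwardUnitNormal (d : ℕ) (Ω : Set (Eucl d)) (ξ u : Eucl d) : Prop :=
  ‖u‖ = 1 ∧ ∃ (U : Set (Eucl d)) (ρ : Eucl d → ℝ),
    ξ ∈ U ∧ IsLocalDefining d 1 Ω U ρ ∧
    ∃ c : ℝ, 0 < c ∧ ∀ w : Eucl d, fderiv ℝ ρ ξ w = -c * (inner ℂ u w : ℂ).re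

/-- `v` lies in the complex tangent space `T^ℂ_ξ ∂Ω`. -/
def InComplexTangent (d : ℕ) (Ω : Set (Eucl d)) (ξ v : Eucl d) : Prop :=
  ∃ (U : Set (Eucl d)) (ρ : Eucl d → ℝ),
    ξ ∈ U ∧ IsLocalDefining d 1 Ω U ρ ∧
    fderiv ℝ ρ ξ v = 0 ∧ fderiv ℝ ρ ξ (Complex.I • v) = 0

/-- The Siegel model of the unit ball. -/
def Siegel (d : ℕ) (h : 0 < d) : Set (Eucl d) :=
  {z : Eucl d | (∑ i : Fin d, if 0 < (i : ℕ) then ‖z i‖ ^ 2 else 0)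
    < (z ⟨0, h⟩).im}

/-!
Construct inductively a basis `u₁ = e₁, u₂ = e₂, u₃, …, u_d` of `ℂ^d` and complex linear
functionals `φ₁ = z₁, φ₂, …, φ_d` such that `C` contains the discs `{ζ u_i : |ζ| < 1}`,
`φ_i (u_j) = 0` for `i < j`, and `C` misses the complex hyperplane `{φ_i = φ_i (u_i)}`. For `i = 1`
the last condition is the hypothesis on `C`, and for `i = 2` it comes from a supporting functional
at `e₂ ∉ C`. For `i ≥ 3`, take a nonzero `v` in the common kernel of the earlier `φ`'s; since `C`
contains no complex line, `v` can be rescaled to a point `u_i ∉ C` whose open unit disc lies in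
`C`, and `φ_i` is a supporting functional at `u_i` (Hahn–Banach). The linear map sending `u_i` to
`e_i` fixes `e₁, e₂` and carries `C` into `𝕂_d`, because `u_i + span {u_j : j > i}` lies in
`{φ_i = φ_i (u_i)}`.
-/

section AdaptedFrame

variable {E : Type*} [NormedAddCommGroup E] [NormedSpace ℂ E] {C : Set E}

theorem exists_smul_notMem_of_isOpen (hC : IsOpen C) (h0 : (0 : E) ∈ C) {v : E}
    (hv : ∃ ζ : ℂ, ζ • v ∉ C) :
    ∃ c : ℂ, c • v ∉ C ∧ ∀ ζ : ℂ, ‖ζ‖ < 1 → ζ • c • v ∈ C := by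
  set D : Set ℂ := {ζ | ζ • v ∉ C}
  have hD : IsClosed D := (hC.preimage (continuous_id.smul continuous_const)).isClosed_compl
  -- `c` is a point of `D` nearest to `0`.
  obtain ⟨c, hcD, hc⟩ := hD.exists_infDist_eq_dist hv 0
  refine ⟨c, hcD, fun ζ hζ => ?_⟩
  by_contra hζc
  have hζcD : ζ * c ∈ D := by simpa only [D, Set.mem_ofPred_eq, mul_smul] using hζc
  have hc0 : 0 < ‖c‖ := norm_pos_iff.2 fun h => hcD (by simpa [h] using h0)
  have := infDist_le_dist_of_mem (x := 0) hζcD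
  rw [hc, dist_zero_left, dist_zero_left, norm_mul] at this
  nlinarith

theorem exists_clm_apply_ne_of_notMem (hconv : Convex ℝ C) (hopen : IsOpen C) {w : E}
    (hw : w ∉ C) : ∃ ψ : E →L[ℂ] ℂ, ∀ x ∈ C, ψ x ≠ ψ w := by
  obtain ⟨ψ, hψ⟩ := RCLike.geometric_hahn_banach_open_point (𝕜 := ℂ) hconv hopen hw
  exact ⟨ψ, fun x hx h => (hψ x hx).ne (congrArg RCLike.re h)⟩

theorem exists_common_ker_ne_zero [FiniteDimensional ℂ E] {n : ℕ} (hn : n < Module.finrank ℂ E)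
    (φ : Fin n → E →L[ℂ] ℂ) : ∃ v : E, v ≠ 0 ∧ ∀ i, φ i v = 0 := by
  have hker : LinearMap.ker (LinearMap.pi fun i => (φ i : E →ₗ[ℂ] ℂ)) ≠ ⊥ :=
    LinearMap.ker_ne_bot_of_finrank_lt (by simpa using hn)
  obtain ⟨v, hv, hv0⟩ := Submodule.exists_mem_ne_zero_of_ne_bot hker
  exact ⟨v, hv0, fun i => congrFun (LinearMap.mem_ker.1 hv) i⟩

structure IsAdaptedFrame (C : Set E) {n : ℕ} (u : Fin n → E) (φ : Fin n → E →L[ℂ] ℂ) : Prop where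
  smul_mem : ∀ i (ζ : ℂ), ‖ζ‖ < 1 → ζ • u i ∈ C
  apply_eq_zero_of_lt : ∀ ⦃i j⦄, i < j → φ i (u j) = 0
  apply_ne : ∀ i, ∀ x ∈ C, φ i x ≠ φ i (u i)

namespace IsAdaptedFrame

variable {n : ℕ} {u : Fin n → E} {φ : Fin n → E →L[ℂ] ℂ}

theorem linearIndependent (hf : IsAdaptedFrame C u φ) (h0 : (0 : E) ∈ C) :
    LinearIndependent ℂ u := by
  set M : Matrix (Fin n) (Fin n) ℂ := Matrix.of fun i j => φ i (u j)
  have hM : M.det ≠ 0 := by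
    rw [Matrix.det_of_isLowerTriangular M fun i j hij => hf.apply_eq_zero_of_lt hij]
    exact Finset.prod_ne_zero_iff.2 fun i _ => by simpa [M] using (hf.apply_ne i 0 h0).symm
  refine Fintype.linearIndependent_iff.2 fun g hg => ?_
  refine congrFun (Matrix.eq_zero_of_mulVec_eq_zero hM (funext fun i => ?_))
  simpa [M, Matrix.mulVec, dotProduct, mul_comm] using congrArg (φ i) hg

theorem snoc (hf : IsAdaptedFrame C u φ) {w : E} {ψ : E →L[ℂ] ℂ}
    (hw : ∀ ζ : ℂ, ‖ζ‖ < 1 → ζ • w ∈ C) (hφw : ∀ i, φ i w = 0) (hψ : ∀ x ∈ C, ψ x ≠ ψ w) :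
    IsAdaptedFrame C (Fin.snoc u w) (Fin.snoc φ ψ) where
  smul_mem i := by
    induction i using Fin.lastCases with
    | last => simpa using hw
    | cast i => simpa using hf.smul_mem i
  apply_eq_zero_of_lt i j hij := by
    induction j using Fin.lastCases with
    | last =>
      induction i using Fin.lastCases with
      | last => exact absurd hij (lt_irrefl _)
      | cast i => simpa using hφw i
    | cast j =>
      induction i using Fin.lastCases with
      | last => exact absurd hij (Fin.castSucc_lt_last j).not_gt
      | cast i => simpa using hf.apply_eq_zero_of_lt (Fin.castSucc_lt_castSucc_iff.1 hij)
  apply_ne i := by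
    induction i using Fin.lastCases with
    | last => simpa using hψ
    | cast i => simpa using hf.apply_ne i

theorem exists_snoc [FiniteDimensional ℂ E] (hopen : IsOpen C) (hconv : Convex ℝ C)
    (h0 : (0 : E) ∈ C) (hline : ∀ v : E, v ≠ 0 → ∃ ζ : ℂ, ζ • v ∉ C)
    (hf : IsAdaptedFrame C u φ) (hn : n < Module.finrank ℂ E) :
    ∃ (w : E) (ψ : E →L[ℂ] ℂ), IsAdaptedFrame C (Fin.snoc u w) (Fin.snoc φ ψ) := by
  obtain ⟨v, hv0, hv⟩ := exists_common_ker_ne_zero hn φ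
  obtain ⟨c, hc, hdisc⟩ := exists_smul_notMem_of_isOpen hopen h0 (hline v hv0)
  obtain ⟨ψ, hψ⟩ := exists_clm_apply_ne_of_notMem hconv hopen hc
  exact ⟨c • v, ψ, hf.snoc hdisc (fun i => by simp [hv i]) hψ⟩

theorem exists_extend [FiniteDimensional ℂ E] (hopen : IsOpen C) (hconv : Convex ℝ C)
    (h0 : (0 : E) ∈ C) (hline : ∀ v : E, v ≠ 0 → ∃ ζ : ℂ, ζ • v ∉ C)
    (hf : IsAdaptedFrame C u φ) {N : ℕ} (hnN : n ≤ N)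
    (hN : N ≤ Module.finrank ℂ E) :
    ∃ (u' : Fin N → E) (φ' : Fin N → E →L[ℂ] ℂ),
      IsAdaptedFrame C u' φ' ∧ ∀ i, u' (Fin.castLE hnN i) = u i := by
  induction N, hnN using Nat.le_induction with
  | base => exact ⟨u, φ, hf, fun i => by simp⟩
  | succ N hnN ih =>
    obtain ⟨u', φ', hf', hu'⟩ := ih (by omega)
    obtain ⟨w, ψ, hw⟩ := hf'.exists_snoc hopen hconv h0 hline (by omega)
    refine ⟨_, _, hw, fun i => ?_⟩
    rw [show Fin.castLE (hnN.trans N.le_succ) i = (Fin.castLE hnN i).castSucc from rfl,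
      Fin.snoc_castSucc, hu']

end IsAdaptedFrame

end AdaptedFrame

theorem InXd.image_linearEquiv {d : ℕ} {C : Set (Eucl d)} (hC : InXd d C)
    (T : Eucl d ≃ₗ[ℂ] Eucl d) : InXd d (T '' C) := by
  obtain ⟨⟨hne, hopen, hconv⟩, hline⟩ := hC
  refine ⟨⟨hne.image T, T.toContinuousLinearEquiv.isOpenMap C hopen,
    hconv.linear_image (T.toLinearMap.restrictScalars ℝ)⟩, ?_⟩
  rintro ⟨z, v, hv, hzv⟩
  refine hline ⟨T.symm z, T.symm v, by simpa using hv, fun ζ => ?_⟩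
  obtain ⟨x, hx, hxzv⟩ := hzv ζ
  rwa [← map_smul, ← map_add, ← hxzv, T.symm_apply_apply]

theorem mem_span_stdB_of_apply_eq_zero {d : ℕ} {i : Fin d} {y : Eucl d}
    (hy : ∀ k ≤ i, y k = 0) : y ∈ Submodule.span ℂ (stdB d '' {j | i < j}) := by
  rw [← (EuclideanSpace.basisFun (Fin d) ℂ).toBasis.sum_repr y]
  refine Submodule.sum_mem _ fun j _ => ?_
  rcases le_or_gt j i with hji | hij
  · simp [hy j hji]
  · exact Submodule.smul_mem _ _ (Submodule.subset_span ⟨j, hij, by simp [stdB]⟩)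

theorem exists_linearEquiv_apply_eq_stdB {d : ℕ} {u : Fin d → Eucl d}
    (hu : LinearIndependent ℂ u) : ∃ T : Eucl d ≃ₗ[ℂ] Eucl d, ∀ j, T (u j) = stdB d j := by
  let b := basisOfLinearIndependentOfCardEqFinrank' u hu (by simp)
  refine ⟨b.equiv (EuclideanSpace.basisFun (Fin d) ℂ).toBasis (Equiv.refl _), fun j => ?_⟩
  rw [← coe_basisOfLinearIndependentOfCardEqFinrank' u hu (by simp), Module.Basis.equiv_apply]
  simp [stdB]

theorem IsAdaptedFrame.inKd_image {d : ℕ} {C : Set (Eucl d)} {u : Fin d → Eucl d}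
    {φ : Fin d → Eucl d →L[ℂ] ℂ} (hC : InXd d C) (hf : IsAdaptedFrame C u φ)
    (T : Eucl d ≃ₗ[ℂ] Eucl d) (hT : ∀ j, T (u j) = stdB d j) : InKd d (T '' C) := by
  refine ⟨hC.image_linearEquiv T, fun i => ⟨?_, ?_⟩⟩
  · rintro _ ⟨ζ, hζ, rfl⟩
    exact ⟨ζ • u i, hf.smul_mem i ζ hζ, by rw [map_smul, hT]⟩
  · have hTu : ∀ j, T.symm (stdB d j) = u j := fun j => by rw [← hT, T.symm_apply_apply]
    have hker : Submodule.span ℂ (stdB d '' {j | i < j}) ≤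
        LinearMap.ker ((φ i : Eucl d →ₗ[ℂ] ℂ) ∘ₗ T.symm.toLinearMap) := by
      rw [Submodule.span_le]
      rintro _ ⟨j, hij, rfl⟩
      simpa [hTu] using hf.apply_eq_zero_of_lt hij
    refine Set.eq_empty_of_forall_notMem ?_
    rintro _ ⟨⟨x, hx, rfl⟩, y, hy, hxy⟩
    have hy0 : φ i (T.symm y) = 0 := LinearMap.mem_ker.1 (hker hy)
    refine hf.apply_ne i x hx ?_
    simpa [hTu, hy0] using congrArg (fun z => φ i (T.symm z)) hxy

theorem exists_isAdaptedFrame_of_slice {d : ℕ} (h₀ : 0 < d) (h₁ : 1 < d) {C : Set (Eucl d)}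
    (hopen : IsOpen C) (hconv : Convex ℝ C)
    (h1 : C ∩ {x | ∃ y ∈ Submodule.span ℂ (stdB d '' {j : Fin d | ⟨0, h₀⟩ < j}),
        x = stdB d ⟨0, h₀⟩ + y} = ∅)
    (h2 : InKd 2 ((fun p : Eucl 2 => p 0 • stdB d ⟨0, h₀⟩ + p 1 • stdB d ⟨1, h₁⟩) ⁻¹' C)) :
    ∃ ψ : Eucl d →L[ℂ] ℂ,
      IsAdaptedFrame C ![stdB d ⟨0, h₀⟩, stdB d ⟨1, h₁⟩] ![EuclideanSpace.proj ⟨0, h₀⟩, ψ] := by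
  set i₀ : Fin d := ⟨0, h₀⟩
  set i₁ : Fin d := ⟨1, h₁⟩
  have hdisc₀ (ζ : ℂ) (hζ : ‖ζ‖ < 1) : ζ • stdB d i₀ ∈ C := by
    simpa [stdB] using (h2.2 0).1 ⟨ζ, hζ, rfl⟩
  have hdisc₁ (ζ : ℂ) (hζ : ‖ζ‖ < 1) : ζ • stdB d i₁ ∈ C := by
    simpa [stdB] using (h2.2 1).1 ⟨ζ, hζ, rfl⟩
  have hproj : ∀ x ∈ C, EuclideanSpace.proj i₀ x ≠ EuclideanSpace.proj i₀ (stdB d i₀) := by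
    intro x hx hx₀
    refine Set.eq_empty_iff_forall_notMem.1 h1 x
      ⟨hx, x - stdB d i₀, mem_span_stdB_of_apply_eq_zero fun k hk => ?_, by simp⟩
    obtain rfl : k = i₀ := Fin.ext (Nat.le_zero.1 hk)
    simpa [stdB, sub_eq_zero] using hx₀
  have he₁ : stdB d i₁ ∉ C := fun h =>
    Set.eq_empty_iff_forall_notMem.1 (h2.2 1).2 (stdB 2 1) ⟨by simpa [stdB] using h, 0, by simp⟩
  obtain ⟨ψ, hψ⟩ := exists_clm_apply_ne_of_notMem hconv hopen he₁
  exact ⟨ψ,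
    { smul_mem := Fin.forall_fin_two.2 ⟨hdisc₀, hdisc₁⟩
      apply_eq_zero_of_lt := by simp [Fin.forall_fin_two, stdB, i₀, i₁]
      apply_ne := Fin.forall_fin_two.2 ⟨hproj, hψ⟩ }⟩

theorem stmt_6 (d : ℕ) (hd : 2 ≤ d) (C : Set (Eucl d)) (hC : InXd d C)
    (h1 : C ∩ {x | ∃ y ∈ Submodule.span ℂ (stdB d '' {j : Fin d | (⟨0, by omega⟩ : Fin d) < j}),
        x = stdB d ⟨0, by omega⟩ + y} = ∅)
    (h2 : InKd 2 ((fun p : Eucl 2 =>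
        p 0 • stdB d ⟨0, by omega⟩ + p 1 • stdB d ⟨1, by omega⟩) ⁻¹' C)) :
    ∃ A : Eucl d ≃ᵃ[ℂ] Eucl d,
      (∀ x ∈ Submodule.span ℂ {stdB d ⟨0, by omega⟩, stdB d ⟨1, by omega⟩}, A x = x) ∧
      InKd d (A '' C) := by
  have ⟨⟨_, hopen, hconv⟩, hline⟩ := hC
  obtain ⟨ψ, hf₂⟩ := exists_isAdaptedFrame_of_slice (by omega) (by omega) hopen hconv h1 h2
  have h0 : (0 : Eucl d) ∈ C := by simpa using hf₂.smul_mem 0 0 (by simp)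
  have hline₀ (v : Eucl d) (hv : v ≠ 0) : ∃ ζ : ℂ, ζ • v ∉ C := by
    by_contra! h
    exact hline ⟨0, v, hv, by simpa using h⟩
  obtain ⟨u, φ, hf, hu⟩ := hf₂.exists_extend hopen hconv h0 hline₀ hd (by simp)
  obtain ⟨T, hT⟩ := exists_linearEquiv_apply_eq_stdB (hf.linearIndependent h0)
  refine ⟨T.toAffineEquiv, fun x hx => ?_, hf.inKd_image hC T hT⟩
  have hfix : Set.EqOn T.toLinearMap (LinearMap.id (R := ℂ))
      {stdB d ⟨0, by omega⟩, stdB d ⟨1, by omega⟩} := by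
    rintro _ (rfl | rfl)
    · exact (hu 0 ▸ hT (Fin.castLE hd 0) :)
    · exact (hu 1 ▸ hT (Fin.castLE hd 1) :)
  exact LinearMap.eqOn_span' hfix hx
end
end

section
/- Suppose Ω ⊆ ℂ^d is a convex domain and L : ℂ → ℂ^d is an injective complex affine map whose image V = L(ℂ) satisfies L(ℍ) = V ∩ Ω, where ℍ = {ζ ∈ ℂ : Im ζ > 0} (i.e., the slice V ∩ Ω is a half-plane in the complex affine line V). Then K_Ω(L(z), L(w)) = K_ℍ(z, w) for all z, w ∈ ℍ. -/
/-!
The slice map `L : ℍ → Ω` is holomorphic. Conversely, a Hahn–Banach functional `Λ` whose real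
part separates the point `L 0 ∉ Ω` from `Ω` gives a holomorphic affine map `P : Ω → ℍ` with
`P ∘ L = id`. Holomorphic maps push chains of discs forward without changing their Poincaré
lengths, so `L` and `P` map the chains from `z` to `w` in `ℍ` and those from `L z` to `L w` in `Ω`
into each other, and the two infima are taken over the same set of lengths.
-/

open Set Metric Filter Asymptotics

noncomputable section

section Kobayashi

variable {F G : Type*} [NormedAddCommGroup F] [NormedSpace ℂ F]
  [NormedAddCommGroup G] [NormedSpace ℂ G] {Ω₁ : Set F} {Ω₂ : Set G}

def kobayashiChainLengths (Ω : Set F) (x y : F) : Set ℝ :=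
  {r : ℝ | ∃ (m : ℕ) (a b : Fin (m + 1) → ℂ) (f : Fin (m + 1) → ℂ → F),
    (∀ i, a i ∈ unitDisc) ∧ (∀ i, b i ∈ unitDisc) ∧
    (∀ i, DifferentiableOn ℂ (f i) unitDisc) ∧
    (∀ i, MapsTo (f i) unitDisc Ω) ∧
    f 0 (a 0) = x ∧
    (∀ i : Fin m, f i.castSucc (b i.castSucc) = f i.succ (a i.succ)) ∧
    f (Fin.last m) (b (Fin.last m)) = y ∧
    r = ∑ i, poincareDist (a i) (b i)}

theorem kobayashiDist_eq_sInf_chainLengths (Ω : Set F) (x y : F) :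
    kobayashiDist Ω x y = sInf (kobayashiChainLengths Ω x y) := rfl

theorem kobayashiChainLengths_subset_of_mapsTo {T : F → G} (hT : DifferentiableOn ℂ T Ω₁)
    (hmap : MapsTo T Ω₁ Ω₂) (x y : F) :
    kobayashiChainLengths Ω₁ x y ⊆ kobayashiChainLengths Ω₂ (T x) (T y) := by
  rintro r ⟨m, a, b, f, ha, hb, hf, hfΩ, hstart, hlink, hend, rfl⟩
  refine ⟨m, a, b, fun i => T ∘ f i, ha, hb, fun i => hT.comp (hf i) (hfΩ i),
    fun i => hmap.comp (hfΩ i), ?_, fun i => ?_, ?_, rfl⟩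
  · simp only [Function.comp_apply, hstart]
  · simp only [Function.comp_apply, hlink i]
  · simp only [Function.comp_apply, hend]

theorem kobayashiDist_eq_of_leftInverse {T : F → G} {P : G → F}
    (hT : DifferentiableOn ℂ T Ω₁) (hTΩ : MapsTo T Ω₁ Ω₂)
    (hP : DifferentiableOn ℂ P Ω₂) (hPΩ : MapsTo P Ω₂ Ω₁) {x y : F}
    (hx : P (T x) = x) (hy : P (T y) = y) :
    kobayashiDist Ω₂ (T x) (T y) = kobayashiDist Ω₁ x y := by
  have hback := kobayashiChainLengths_subset_of_mapsTo hP hPΩ (T x) (T y)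
  rw [hx, hy] at hback
  rw [kobayashiDist_eq_sInf_chainLengths, kobayashiDist_eq_sInf_chainLengths,
    Subset.antisymm hback (kobayashiChainLengths_subset_of_mapsTo hT hTΩ x y)]

end Kobayashi

theorem AffineMap.differentiable_of_finiteDimensional {𝕜 E F : Type*}
    [NontriviallyNormedField 𝕜] [CompleteSpace 𝕜]
    [NormedAddCommGroup E] [NormedSpace 𝕜 E] [FiniteDimensional 𝕜 E]
    [NormedAddCommGroup F] [NormedSpace 𝕜 F] (f : E →ᵃ[𝕜] F) : Differentiable 𝕜 f := by
  rw [f.decomp]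
  exact (LinearMap.toContinuousLinearMap f.linear).differentiable.add_const _

theorem re_eq_zero_and_im_pos_of_re_mul_neg {a : ℂ}
    (h : ∀ z ∈ upperHalf, (z * a).re < 0) : a.re = 0 ∧ 0 < a.im := by
  have him : 0 < a.im := by simpa using h Complex.I (by simp [upperHalf])
  refine ⟨?_, him⟩
  by_contra hre
  have := h ((a.im / a.re : ℝ) + Complex.I) (by simp [upperHalf])
  simp only [Complex.mul_re, Complex.add_re, Complex.add_im, Complex.ofReal_re,
    Complex.ofReal_im, Complex.I_re, Complex.I_im] at this
  field_simp at this
  linarith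

theorem div_mem_upperHalf {w a : ℂ} (hw : w.re < 0) (ha : a.re = 0) (ha' : 0 < a.im) :
    w / a ∈ upperHalf := by
  have hdiv : (w / a).im = -w.re / a.im := by
    rw [Complex.div_im, Complex.normSq_apply, ha]
    field_simp
    ring
  show 0 < (w / a).im
  rw [hdiv]
  exact div_pos (neg_pos.2 hw) ha'

section Slice

variable {E : Type*} [NormedAddCommGroup E] [NormedSpace ℂ E] {Ω : Set E}
  {L : ℂ →ᵃ[ℂ] E}

theorem AffineMap.mapsTo_of_image_upperHalf (hslice : L '' upperHalf = range L ∩ Ω) :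
    MapsTo L upperHalf Ω :=
  mapsTo_iff_image_subset.2 (hslice ▸ inter_subset_right)

theorem AffineMap.apply_zero_notMem_of_image_upperHalf (hL : Function.Injective L)
    (hslice : L '' upperHalf = range L ∩ Ω) : L 0 ∉ Ω := by
  intro h0
  obtain ⟨t, ht, hLt⟩ : L 0 ∈ L '' upperHalf := hslice ▸ ⟨mem_range_self 0, h0⟩
  rw [hL hLt] at ht
  exact lt_irrefl (0 : ℝ) ht

/-- Since `Re Λ < Re Λ (L 0)` on `L '' ℍ`, the number `Λ (L 1 - L 0)` lies on the positive
imaginary axis, and dividing by it turns the half-plane `Re Λ < Re Λ (L 0)` into `ℍ`. -/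
theorem exists_differentiable_retraction_upperHalf (hΩo : IsOpen Ω) (hΩc : Convex ℝ Ω)
    (hL : Function.Injective L) (hslice : L '' upperHalf = range L ∩ Ω) :
    ∃ P : E → ℂ, Differentiable ℂ P ∧ MapsTo P Ω upperHalf ∧ ∀ z, P (L z) = z := by
  obtain ⟨Λ, hΛ⟩ := RCLike.geometric_hahn_banach_open_point (𝕜 := ℂ) hΩc hΩo
    (L.apply_zero_notMem_of_image_upperHalf hL hslice)
  set a := Λ (L.linear 1)
  have hΛL : ∀ z, Λ (L z) - Λ (L 0) = z * a := fun z => by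
    rw [← map_sub, ← vsub_eq_sub, ← L.linearMap_vsub, vsub_eq_sub, sub_zero,
      ← smul_eq_mul, ← map_smul, ← map_smul, smul_eq_mul, mul_one]
  obtain ⟨hare, haim⟩ : a.re = 0 ∧ 0 < a.im := by
    refine re_eq_zero_and_im_pos_of_re_mul_neg fun z hz => ?_
    have := hΛ (L z) (L.mapsTo_of_image_upperHalf hslice hz)
    rw [← hΛL, Complex.sub_re]
    simpa using this
  have ha : a ≠ 0 := fun h => by simp [h] at haim
  refine ⟨fun x => (Λ x - Λ (L 0)) / a, by fun_prop, fun x hx => ?_, fun z => ?_⟩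
  · exact div_mem_upperHalf (by simpa [Complex.sub_re] using hΛ x hx) hare haim
  · simp only [hΛL, mul_div_cancel_right₀ z ha]

end Slice

theorem stmt_12_general (d : ℕ) (Ω : Set (Eucl d)) (hΩ : IsConvexDomain d Ω)
    (L : ℂ →ᵃ[ℂ] Eucl d) (hL : Function.Injective L)
    (hslice : L '' upperHalf = Set.range L ∩ Ω) :
    ∀ z ∈ upperHalf, ∀ w ∈ upperHalf,
      kobayashiDist Ω (L z) (L w) = kobayashiDist upperHalf z w := by
  obtain ⟨P, hP, hPΩ, hPL⟩ := exists_differentiable_retraction_upperHalf hΩ.2.1 hΩ.2.2 hL hslice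
  intro z _ w _
  exact kobayashiDist_eq_of_leftInverse L.differentiable_of_finiteDimensional.differentiableOn
    (L.mapsTo_of_image_upperHalf hslice) hP.differentiableOn hPΩ (hPL z) (hPL w)

theorem stmt_12 (d : ℕ) (hd : 1 ≤ d) (Ω : Set (Eucl d)) (hΩ : IsConvexDomain d Ω)
    (L : ℂ →ᵃ[ℂ] Eucl d) (hL : Function.Injective L)
    (hslice : L '' upperHalf = Set.range L ∩ Ω) :
    ∀ z ∈ upperHalf, ∀ w ∈ upperHalf,
      kobayashiDist Ω (L z) (L w) = kobayashiDist upperHalf z w :=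
  stmt_12_general d Ω hΩ L hL hslice

end
end

section
/- Suppose Ω ⊆ ℂ^d is a convex domain, x, y ∈ Ω, L is a complex affine line containing x and y, and ξ ∈ L with ξ ∉ Ω. Then (1/2)·| log( ‖x−ξ‖ / ‖y−ξ‖ ) | ≤ K_Ω(x, y), where ‖·‖ is the Euclidean norm. -/
open Set Metric Filter Asymptotics

noncomputable section

/-!
Separating `ξ` from the convex set `Ω` gives a continuous `ℂ`-linear form `ℓ` with
`Re ℓ (z - ξ) > 0` on `Ω`. The Schwarz lemma, conjugated by a disc automorphism and by the
Cayley transform, gives `|log ‖g a‖ - log ‖g b‖| ≤ 2 ρ(a, b)` for every holomorphic map `g` from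
the disc to the right half-plane; summing along a chain of discs, `z ↦ (1/2) log ‖ℓ (z - ξ)‖` is
`1`-Lipschitz for `K_Ω`. On the complex line `L`, `ℓ (z - ξ)` is a
fixed multiple of the coordinate of `z - ξ`, so `‖ℓ (x - ξ)‖ / ‖ℓ (y - ξ)‖ = ‖x - ξ‖ / ‖y - ξ‖`.
-/

open Complex (normSq normSq_apply sub_re sub_im add_re add_im mul_re mul_im one_re one_im)
open ComplexConjugate

lemma mem_unitDisc {z : ℂ} : z ∈ unitDisc ↔ ‖z‖ < 1 := mem_ball_zero_iff

lemma norm_sub_lt_norm_add_conj {p q : ℂ} (hp : 0 < p.re) (hq : 0 < q.re) :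
    ‖q - p‖ < ‖q + conj p‖ := by
  rw [← sq_lt_sq₀ (norm_nonneg _) (norm_nonneg _), Complex.sq_norm, Complex.sq_norm]
  simp only [normSq_apply, sub_re, sub_im, add_re, add_im, Complex.conj_re, Complex.conj_im]
  nlinarith

lemma abs_log_norm_sub_log_norm_le {p q : ℂ} (hp : 0 < p.re) (hq : 0 < q.re) {t : ℝ}
    (ht : t < 1) (h : ‖(q - p) / (q + conj p)‖ ≤ t) :
    |Real.log ‖q‖ - Real.log ‖p‖| ≤ Real.log ((1 + t) / (1 - t)) := by
  have hp₀ : 0 < ‖p‖ := norm_pos_iff.2 fun h₀ => by simp [h₀] at hp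
  have hq₀ : 0 < ‖q‖ := norm_pos_iff.2 fun h₀ => by simp [h₀] at hq
  have hden : 0 < ‖q + conj p‖ := (norm_nonneg _).trans_lt (norm_sub_lt_norm_add_conj hp hq)
  have ht₀ : 0 ≤ t := (norm_nonneg _).trans h
  have hdiff : ‖q - p‖ ≤ t * (‖q‖ + ‖p‖) := by
    rw [norm_div, div_le_iff₀ hden] at h
    calc ‖q - p‖ ≤ t * ‖q + conj p‖ := h
      _ ≤ t * (‖q‖ + ‖p‖) := by
        gcongr
        simpa only [Complex.norm_conj] using norm_add_le q (conj p)
  have h₁ := norm_sub_norm_le q p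
  have h₂ := norm_sub_norm_le p q
  rw [norm_sub_rev] at h₂
  rw [abs_sub_le_iff, ← Real.log_div hq₀.ne' hp₀.ne', ← Real.log_div hp₀.ne' hq₀.ne']
  constructor <;> refine Real.log_le_log (by positivity) ?_ <;>
    rw [div_le_div_iff₀ (by assumption) (by linarith)] <;> nlinarith

def mobius (a z : ℂ) : ℂ := (z - a) / (1 - conj a * z)

lemma norm_sub_lt_norm_one_sub_conj_mul {a z : ℂ} (ha : ‖a‖ < 1) (hz : ‖z‖ < 1) :
    ‖z - a‖ < ‖1 - conj a * z‖ := by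
  have key : normSq (1 - conj a * z) - normSq (z - a) = (1 - normSq a) * (1 - normSq z) := by
    simp only [normSq_apply, sub_re, sub_im, mul_re, mul_im, Complex.conj_re,
      Complex.conj_im, one_re, one_im]
    ring
  have ha' : normSq a < 1 := by rw [← Complex.sq_norm]; nlinarith [norm_nonneg a]
  have hz' : normSq z < 1 := by rw [← Complex.sq_norm]; nlinarith [norm_nonneg z]
  rw [← sq_lt_sq₀ (norm_nonneg _) (norm_nonneg _), Complex.sq_norm, Complex.sq_norm]
  nlinarith

lemma one_sub_conj_mul_ne_zero {a z : ℂ} (ha : ‖a‖ < 1) (hz : ‖z‖ < 1) :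
    1 - conj a * z ≠ 0 :=
  norm_pos_iff.1 ((norm_nonneg _).trans_lt (norm_sub_lt_norm_one_sub_conj_mul ha hz))

lemma mobius_mem_unitDisc {a z : ℂ} (ha : a ∈ unitDisc) (hz : z ∈ unitDisc) :
    mobius a z ∈ unitDisc := by
  rw [mem_unitDisc] at *
  rw [mobius, norm_div, div_lt_one ((norm_nonneg _).trans_lt
    (norm_sub_lt_norm_one_sub_conj_mul ha hz))]
  exact norm_sub_lt_norm_one_sub_conj_mul ha hz

lemma differentiableOn_mobius {a : ℂ} (ha : a ∈ unitDisc) :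
    DifferentiableOn ℂ (mobius a) unitDisc := by
  refine (differentiableOn_id.sub_const a).div (by fun_prop) fun z hz => ?_
  exact one_sub_conj_mul_ne_zero (mem_unitDisc.1 ha) (mem_unitDisc.1 hz)

lemma mobius_neg_zero (a : ℂ) : mobius (-a) 0 = a := by
  simp [mobius]

lemma mobius_neg_mobius {a z : ℂ} (ha : a ∈ unitDisc) (hz : z ∈ unitDisc) :
    mobius (-a) (mobius a z) = z := by
  have h₁ := one_sub_conj_mul_ne_zero (mem_unitDisc.1 ha) (mem_unitDisc.1 hz)
  have h₂ : 1 - conj (-a) * mobius a z ≠ 0 :=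
    one_sub_conj_mul_ne_zero (by rw [norm_neg]; exact mem_unitDisc.1 ha)
      (mem_unitDisc.1 (mobius_mem_unitDisc ha hz))
  rw [mobius, div_eq_iff h₂]
  have hw : mobius a z * (1 - conj a * z) = z - a := div_mul_cancel₀ _ h₁
  simp only [map_neg]
  linear_combination hw

section SchwarzPick

variable {g : ℂ → ℂ}

lemma abs_log_norm_sub_log_norm_zero_le (hg : DifferentiableOn ℂ g unitDisc)
    (hre : ∀ ζ ∈ unitDisc, 0 < (g ζ).re) {w : ℂ} (hw : w ∈ unitDisc) :
    |Real.log ‖g w‖ - Real.log ‖g 0‖| ≤ Real.log ((1 + ‖w‖) / (1 - ‖w‖)) := by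
  have h₀ : (0 : ℂ) ∈ unitDisc := mem_unitDisc.2 (by simp)
  have hlt : ∀ ζ ∈ unitDisc, ‖g ζ - g 0‖ < ‖g ζ + conj (g 0)‖ := fun ζ hζ =>
    norm_sub_lt_norm_add_conj (hre 0 h₀) (hre ζ hζ)
  -- the Cayley transform of the right half-plane onto the disc that sends `g 0` to `0`
  set F : ℂ → ℂ := fun ζ => (g ζ - g 0) / (g ζ + conj (g 0))
  have hF : DifferentiableOn ℂ F unitDisc :=
    (hg.sub_const _).div (hg.add_const _) fun ζ hζ =>
      norm_pos_iff.1 ((norm_nonneg _).trans_lt (hlt ζ hζ))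
  have hFmaps : MapsTo F unitDisc (closedBall 0 1) := fun ζ hζ => by
    rw [mem_closedBall_zero_iff, norm_div]
    exact div_le_one_of_le₀ (hlt ζ hζ).le (norm_nonneg _)
  have hschwarz : ‖F w‖ ≤ ‖w‖ :=
    Complex.norm_le_norm_of_mapsTo_ball hF hFmaps (by simp [F]) (mem_unitDisc.1 hw)
  exact abs_log_norm_sub_log_norm_le (hre 0 h₀) (hre w hw) (mem_unitDisc.1 hw) hschwarz

lemma abs_log_norm_sub_log_norm_le_two_mul_poincareDist (hg : DifferentiableOn ℂ g unitDisc)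
    (hre : ∀ ζ ∈ unitDisc, 0 < (g ζ).re) {a b : ℂ} (ha : a ∈ unitDisc) (hb : b ∈ unitDisc) :
    |Real.log ‖g a‖ - Real.log ‖g b‖| ≤ 2 * poincareDist a b := by
  have hb' : -b ∈ unitDisc := by rwa [mem_unitDisc, norm_neg, ← mem_unitDisc]
  have key := abs_log_norm_sub_log_norm_zero_le (g := g ∘ mobius (-b))
    (hg.comp (differentiableOn_mobius hb') fun _ hζ => mobius_mem_unitDisc hb' hζ)
    (fun _ hζ => hre _ (mobius_mem_unitDisc hb' hζ)) (mobius_mem_unitDisc hb ha)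
  simp only [Function.comp_apply, mobius_neg_mobius hb ha, mobius_neg_zero] at key
  rw [mobius] at key
  rw [poincareDist]
  linarith

end SchwarzPick

lemma abs_sub_le_sum_abs_sub_of_chain {m : ℕ} (u w : Fin (m + 1) → ℝ)
    (hchain : ∀ i : Fin m, w i.castSucc = u i.succ) :
    |u 0 - w (Fin.last m)| ≤ ∑ i, |u i - w i| := by
  have htelescope : u 0 - w (Fin.last m) = ∑ i, (u i - w i) := by
    rw [Finset.sum_sub_distrib, Fin.sum_univ_succ u, Fin.sum_univ_castSucc w]
    simp only [hchain]
    ring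
  rw [htelescope]
  exact Finset.abs_sum_le_sum_abs _ _

section Kobayashi

variable {F : Type*} [NormedAddCommGroup F] [NormedSpace ℂ F]

def discChainLengths (Ω : Set F) (x y : F) : Set ℝ :=
  {r : ℝ | ∃ (m : ℕ) (a b : Fin (m + 1) → ℂ) (f : Fin (m + 1) → ℂ → F),
    (∀ i, a i ∈ unitDisc) ∧ (∀ i, b i ∈ unitDisc) ∧
    (∀ i, DifferentiableOn ℂ (f i) unitDisc) ∧
    (∀ i, MapsTo (f i) unitDisc Ω) ∧
    f 0 (a 0) = x ∧
    (∀ i : Fin m, f i.castSucc (b i.castSucc) = f i.succ (a i.succ)) ∧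
    f (Fin.last m) (b (Fin.last m)) = y ∧
    r = ∑ i, poincareDist (a i) (b i)}

lemma kobayashiDist_eq_sInf (Ω : Set F) (x y : F) :
    kobayashiDist Ω x y = sInf (discChainLengths Ω x y) := rfl

lemma abs_sub_le_mul_kobayashiDist {Ω : Set F} {x y : F}
    (hne : (discChainLengths Ω x y).Nonempty) (Φ : F → ℝ) {c : ℝ} (hc : 0 ≤ c)
    (hΦ : ∀ f : ℂ → F, DifferentiableOn ℂ f unitDisc → MapsTo f unitDisc Ω →
      ∀ a ∈ unitDisc, ∀ b ∈ unitDisc, |Φ (f a) - Φ (f b)| ≤ c * poincareDist a b) :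
    |Φ x - Φ y| ≤ c * kobayashiDist Ω x y := by
  rw [kobayashiDist_eq_sInf, ← smul_eq_mul, ← Real.sInf_smul_of_nonneg hc]
  refine le_csInf (hne.image _) ?_
  rintro _ ⟨_, ⟨m, a, b, f, ha, hb, hf, hmaps, rfl, hlink, rfl, rfl⟩, rfl⟩
  calc |Φ (f 0 (a 0)) - Φ (f (Fin.last m) (b (Fin.last m)))|
      ≤ ∑ i, |Φ (f i (a i)) - Φ (f i (b i))| :=
        abs_sub_le_sum_abs_sub_of_chain (fun i => Φ (f i (a i))) (fun i => Φ (f i (b i)))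
          fun i => by rw [hlink i]
    _ ≤ ∑ i, c * poincareDist (a i) (b i) :=
        Finset.sum_le_sum fun i _ => hΦ _ (hf i) (hmaps i) _ (ha i) _ (hb i)
    _ = c • ∑ i, poincareDist (a i) (b i) := by rw [smul_eq_mul, Finset.mul_sum]

lemma discChainLengths_nonempty_of_segment_subset {Ω : Set F} (hΩ : IsOpen Ω) {x y : F}
    (hxy : segment ℝ x y ⊆ Ω) : (discChainLengths Ω x y).Nonempty := by
  have hcompact : IsCompact (segment ℝ x y) := by
    rw [segment_eq_image']
    exact isCompact_Icc.image (by fun_prop)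
  obtain ⟨ε, hε, hthick⟩ := hcompact.exists_thickening_subset_open hΩ hxy
  obtain ⟨n, hn⟩ := exists_nat_gt (2 * ‖y - x‖ / ε)
  have hN : (0 : ℝ) < n + 1 := by positivity
  have hNε : 2 * ‖y - x‖ < (n + 1) * ε := by
    rw [div_lt_iff₀ hε] at hn
    linarith
  -- the `i`-th disc is the `2‖y - x‖/(n+1)`-ball around `x + (i/(n+1)) • (y - x)`
  let f : Fin (n + 1) → ℂ → F := fun i ζ => x + ((i + 2 * ζ) / (n + 1) : ℂ) • (y - x)
  have hmaps : ∀ i, MapsTo (f i) unitDisc Ω := by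
    intro i ζ hζ
    have hcenter : x + ((i : ℝ) / (n + 1)) • (y - x) ∈ segment ℝ x y := by
      rw [segment_eq_image']
      refine ⟨_, ⟨by positivity, (div_le_one hN).2 ?_⟩, rfl⟩
      exact_mod_cast i.is_le.trans n.le_succ
    refine hthick (ball_subset_thickening hcenter ε ?_)
    have hdiff : f i ζ - (x + ((i : ℝ) / (n + 1)) • (y - x)) = (2 * ζ / (n + 1)) • (y - x) := by
      rw [← Complex.coe_smul]
      simp only [f]
      rw [add_sub_add_left_eq_sub, ← sub_smul]
      push_cast
      ring_nf
    rw [mem_ball, dist_eq_norm, hdiff, norm_smul, norm_div, norm_mul]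
    have hnorm : ‖(n : ℂ) + 1‖ = n + 1 := by exact_mod_cast Complex.norm_natCast (n + 1)
    rw [hnorm, Complex.norm_two, div_mul_eq_mul_div, div_lt_iff₀ hN]
    nlinarith [mem_unitDisc.1 hζ, norm_nonneg (y - x)]
  refine ⟨_, n, fun _ => 0, fun _ => 1 / 2, f, fun _ => mem_unitDisc.2 (by simp),
    fun _ => mem_unitDisc.2 (by norm_num), fun i => by fun_prop, hmaps, by simp [f],
    fun i => ?_, ?_, rfl⟩
  · simp only [f, Fin.val_castSucc, Fin.val_succ]
    congr 2
    push_cast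
    ring
  · simp only [f, Fin.val_last]
    rw [show ((n : ℂ) + 2 * (1 / 2)) / (n + 1) = 1 by field_simp, one_smul, add_sub_cancel]

lemma abs_log_norm_sub_log_norm_le_two_mul_kobayashiDist {Ω : Set F} {x y : F}
    (hne : (discChainLengths Ω x y).Nonempty) {σ : F → ℂ} (hσ : Differentiable ℂ σ)
    (hre : ∀ z ∈ Ω, 0 < (σ z).re) :
    |Real.log ‖σ x‖ - Real.log ‖σ y‖| ≤ 2 * kobayashiDist Ω x y :=
  abs_sub_le_mul_kobayashiDist hne (fun z => Real.log ‖σ z‖) zero_le_two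
    fun _ hf hmaps _ ha _ hb => abs_log_norm_sub_log_norm_le_two_mul_poincareDist
      (hσ.comp_differentiableOn hf) (fun _ hζ => hre _ (hmaps hζ)) ha hb

end Kobayashi

section

variable {F : Type*} [NormedAddCommGroup F] [NormedSpace ℂ F]

lemma exists_re_pos_of_notMem {Ω : Set F} (hΩ : IsOpen Ω) (hconv : Convex ℝ Ω) {ξ : F}
    (hξ : ξ ∉ Ω) : ∃ ℓ : StrongDual ℂ F, ∀ z ∈ Ω, 0 < (ℓ (z - ξ)).re := by
  obtain ⟨f, hf⟩ := RCLike.geometric_hahn_banach_open_point (𝕜 := ℂ) hconv hΩ hξ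
  refine ⟨-f, fun z hz => ?_⟩
  simpa [map_sub] using hf z hz

lemma norm_smul_div_norm_smul_eq (ℓ : StrongDual ℂ F) {v : F} (hv : ℓ v ≠ 0) (α β : ℂ) :
    ‖α • v‖ / ‖β • v‖ = ‖ℓ (α • v)‖ / ‖ℓ (β • v)‖ := by
  have hv₀ : v ≠ 0 := by rintro rfl; simp at hv
  simp only [map_smul, norm_smul, smul_eq_mul, norm_mul]
  rw [mul_div_mul_right _ _ (norm_ne_zero_iff.2 hv₀),
    mul_div_mul_right _ _ (norm_ne_zero_iff.2 hv)]

end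

theorem stmt_14_general (d : ℕ) (Ω : Set (Eucl d)) (hΩ : IsConvexDomain d Ω)
    (x y : Eucl d) (hx : x ∈ Ω) (hy : y ∈ Ω)
    (L : ℂ →ᵃ[ℂ] Eucl d)
    (hxL : x ∈ Set.range L) (hyL : y ∈ Set.range L)
    (ξ : Eucl d) (hξL : ξ ∈ Set.range L) (hξ : ξ ∉ Ω) :
    (1 / 2) * |Real.log (‖x - ξ‖ / ‖y - ξ‖)| ≤ kobayashiDist Ω x y := by
  obtain ⟨-, hopen, hconv⟩ := hΩ
  obtain ⟨ℓ, hℓ⟩ := exists_re_pos_of_notMem hopen hconv hξ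
  have hℓ₀ : ∀ z ∈ Ω, ℓ (z - ξ) ≠ 0 := fun z hz h => by simpa [h] using hℓ z hz
  have hK := abs_log_norm_sub_log_norm_le_two_mul_kobayashiDist
    (discChainLengths_nonempty_of_segment_subset hopen (hconv.segment_subset hx hy))
    (σ := fun z => ℓ (z - ξ)) (by fun_prop) hℓ
  obtain ⟨s, rfl⟩ := hξL
  obtain ⟨p, rfl⟩ := hxL
  obtain ⟨q, rfl⟩ := hyL
  have hline : ∀ p, L p - L s = (p - s) • L.linear 1 := fun p => by
    rw [← vsub_eq_sub, ← L.linearMap_vsub, ← L.linear.map_smul, smul_eq_mul, mul_one,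
      vsub_eq_sub]
  have hv : ℓ (L.linear 1) ≠ 0 := fun h => hℓ₀ _ hx (by rw [hline, map_smul, h, smul_zero])
  have hratio : ‖L p - L s‖ / ‖L q - L s‖ = ‖ℓ (L p - L s)‖ / ‖ℓ (L q - L s)‖ := by
    rw [hline p, hline q]
    exact norm_smul_div_norm_smul_eq ℓ hv _ _
  rw [hratio, Real.log_div (norm_ne_zero_iff.2 (hℓ₀ _ hx)) (norm_ne_zero_iff.2 (hℓ₀ _ hy))]
  linarith

theorem stmt_14 (d : ℕ) (hd : 1 ≤ d) (Ω : Set (Eucl d)) (hΩ : IsConvexDomain d Ω)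
    (x y : Eucl d) (hx : x ∈ Ω) (hy : y ∈ Ω)
    (L : ℂ →ᵃ[ℂ] Eucl d) (hL : Function.Injective L)
    (hxL : x ∈ Set.range L) (hyL : y ∈ Set.range L)
    (ξ : Eucl d) (hξL : ξ ∈ Set.range L) (hξ : ξ ∉ Ω) :
    (1 / 2) * |Real.log (‖x - ξ‖ / ‖y - ξ‖)| ≤ kobayashiDist Ω x y :=
  stmt_14_general d Ω hΩ x y hx hy L hxL hyL ξ hξL hξ

end
end
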